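/- Fix γ ∈ (−3, 0). Suppose additionally that ∫_{𝕊²} B(ω) dω > 0. Then there exist constants 0 < c ≤ C such that for all v ∈ ℝ³, c (1 + |v|)^γ ≤ ν(v) ≤ C (1 + |v|)^γ; that is, the collision frequency ν is equivalent to the weight function w(v) = (1 + |v|)^γ. -/

import Mathlib

open MeasureTheory Real Set

noncomputable section

/-- Velocity space ℝ³. -/
abbrev R3 := EuclideanSpace ℝ (Fin 3)

/-- The unit sphere 𝕊² ⊆ ℝ³. -/
abbrev Sphere2 := Metric.sphere (0 : R3) 1

/-- The surface measure dω on 𝕊². -/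
def sphMeasure : Measure Sphere2 := (volume : Measure R3).toSphere

/-- Post-collision velocity u′ = u + ((v − u)·ω)ω. -/
def uPost (u v : R3) (ω : Sphere2) : R3 := u + (inner ℝ (v - u) (ω : R3) : ℝ) • (ω : R3)

/-- Post-collision velocity v′ = v + ((u − v)·ω)ω. -/
def vPost (u v : R3) (ω : Sphere2) : R3 := v + (inner ℝ (u - v) (ω : R3) : ℝ) • (ω : R3)

/-- The weight function w(v) = (1 + |v|)^γ. -/
def wt (γ : ℝ) (v : R3) : ℝ := (1 + ‖v‖) ^ γ

/-- The collision frequency ν(v) = ∫∫ |u−v|^γ B(ω) e^{−|u|²} dω du. -/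
def nu (γ : ℝ) (B : Sphere2 → ℝ) (v : R3) : ℝ :=
  ∫ u : R3, ∫ ω : Sphere2, ‖u - v‖ ^ γ * B ω * Real.exp (-‖u‖ ^ 2) ∂sphMeasure

/-- K₂ g (v) = ∫∫ |u−v|^γ B(ω) e^{−|u|²/2} ( e^{−|v′|²/2} g(u′) + e^{−|u′|²/2} g(v′) ) dω du. -/
def K2op (γ : ℝ) (B : Sphere2 → ℝ) (g : R3 → ℝ) (v : R3) : ℝ :=
  ∫ u : R3, ∫ ω : Sphere2, ‖u - v‖ ^ γ * B ω * Real.exp (-‖u‖ ^ 2 / 2) *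
    (Real.exp (-‖vPost u v ω‖ ^ 2 / 2) * g (uPost u v ω)
      + Real.exp (-‖uPost u v ω‖ ^ 2 / 2) * g (vPost u v ω)) ∂sphMeasure

/-- K₁ g (v) = e^{−|v|²/2} ∫∫ |u−v|^γ B(ω) e^{−|u|²/2} g(u) dω du. -/
def K1op (γ : ℝ) (B : Sphere2 → ℝ) (g : R3 → ℝ) (v : R3) : ℝ :=
  Real.exp (-‖v‖ ^ 2 / 2) *
    ∫ u : R3, ∫ ω : Sphere2, ‖u - v‖ ^ γ * B ω * Real.exp (-‖u‖ ^ 2 / 2) * g u ∂sphMeasure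

/-- K = K₂ − K₁. -/
def Kop (γ : ℝ) (B : Sphere2 → ℝ) (g : R3 → ℝ) (v : R3) : ℝ :=
  K2op γ B g v - K1op γ B g v

/-- The linearized collision operator L g = ν g − K g. -/
def Lop (γ : ℝ) (B : Sphere2 → ℝ) (g : R3 → ℝ) (v : R3) : ℝ :=
  nu γ B v * g v - Kop γ B g v

/-- Gain term Γ₊(g₁,g₂)(v). -/
def GammaPlus (γ : ℝ) (B : Sphere2 → ℝ) (g₁ g₂ : R3 → ℝ) (v : R3) : ℝ :=
  ∫ u : R3, ∫ ω : Sphere2, ‖u - v‖ ^ γ * B ω * Real.exp (-‖u‖ ^ 2 / 2) *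
    (g₁ (uPost u v ω) * g₂ (vPost u v ω)) ∂sphMeasure

/-- Loss term Γ₋(g₁,g₂)(v). -/
def GammaMinus (γ : ℝ) (B : Sphere2 → ℝ) (g₁ g₂ : R3 → ℝ) (v : R3) : ℝ :=
  ∫ u : R3, ∫ ω : Sphere2, ‖u - v‖ ^ γ * B ω * Real.exp (-‖u‖ ^ 2 / 2) *
    (g₁ u * g₂ v) ∂sphMeasure

/-- Γ = Γ₊ − Γ₋. -/
def GammaOp (γ : ℝ) (B : Sphere2 → ℝ) (g₁ g₂ : R3 → ℝ) (v : R3) : ℝ :=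
  GammaPlus γ B g₁ g₂ v - GammaMinus γ B g₁ g₂ v

/-- Partial derivative in the i-th coordinate direction. -/
def pd (i : Fin 3) (g : R3 → ℝ) : R3 → ℝ :=
  fun v => fderiv ℝ g v (EuclideanSpace.single i 1)

/-- Multi-index derivative ∂_β = ∂_v^β. -/
def pdM (β : Fin 3 → ℕ) (g : R3 → ℝ) : R3 → ℝ :=
  (pd 0)^[β 0] ((pd 1)^[β 1] ((pd 2)^[β 2] g))

/-- Order |β| of a multi-index. -/
def deg (β : Fin 3 → ℕ) : ℕ := ∑ i, β i

/-- The finite set of multi-indices β with |β| ≤ N. -/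
def MIdx (N : ℕ) : Finset (Fin 3 → ℕ) :=
  (Fintype.piFinset fun _ : Fin 3 => Finset.range (N + 1)).filter (fun β => deg β ≤ N)

/-- Squared weighted L² norm ‖w^θ g‖². -/
def wNormSq (γ θ : ℝ) (g : R3 → ℝ) : ℝ := ∫ v : R3, (wt γ v ^ θ * g v) ^ 2

/-- Squared weighted L²_ν norm ‖w^θ g‖_ν². -/
def wNuNormSq (γ : ℝ) (B : Sphere2 → ℝ) (θ : ℝ) (g : R3 → ℝ) : ℝ :=
  ∫ v : R3, nu γ B v * (wt γ v ^ θ * g v) ^ 2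

/-!
The angular factor separates: `ν(v) = (∫ B dω) · ∫ |u - v|^γ e^{-|u|²} du`, so it suffices to
compare the last integral with `(1 + |v|)^γ`. From below, restrict to the unit ball, where
`|u - v| ≤ 1 + |v|`. From above, Peetre's inequality `1 + |v| ≤ (1 + |u - v|)(1 + |u|)` moves the
weight onto `u`, where the Gaussian absorbs it, and the singularity `|u - v|^γ` is locally
integrable because `γ > -3`.
-/

open Metric Module

lemma one_add_rpow_mul_exp_neg_sq_le {a s : ℝ} (ha : 0 ≤ a) (hs : 0 ≤ s) :
    (1 + a) ^ s * exp (-a ^ 2) ≤ exp (s ^ 2 / 2) * exp (-a ^ 2 / 2) := by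
  have h1 : (1 + a) ^ s ≤ exp (s * a) := by
    calc (1 + a) ^ s ≤ exp a ^ s := by
          gcongr
          linarith [add_one_le_exp a]
      _ = exp (s * a) := by rw [← exp_mul, mul_comm]
  calc (1 + a) ^ s * exp (-a ^ 2) ≤ exp (s * a) * exp (-a ^ 2) := by gcongr
    _ ≤ exp (s ^ 2 / 2) * exp (-a ^ 2 / 2) := by
      rw [← exp_add, ← exp_add, exp_le_exp]
      nlinarith [sq_nonneg (a - s)]

lemma rpow_le_two_rpow_mul_one_add_rpow_mul_max {a γ : ℝ} (ha : 0 ≤ a) (hγ : γ ≤ 0) :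
    a ^ γ ≤ 2 ^ (-γ) * (1 + a) ^ γ * max 1 (a ^ γ) := by
  rcases lt_or_ge a 1 with ha1 | ha1
  · have hone : 1 ≤ 2 ^ (-γ) * (1 + a) ^ γ := by
      calc (1 : ℝ) = 2 ^ (-γ) * 2 ^ γ := by rw [← rpow_add two_pos]; simp
        _ ≤ 2 ^ (-γ) * (1 + a) ^ γ :=
          mul_le_mul_of_nonneg_left
            (rpow_le_rpow_of_nonpos (by positivity) (by linarith : 1 + a ≤ 2) hγ) (by positivity)
    calc a ^ γ ≤ max 1 (a ^ γ) := le_max_right _ _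
      _ ≤ _ := le_mul_of_one_le_left (by positivity) hone
  · have hscale : a ^ γ ≤ 2 ^ (-γ) * (1 + a) ^ γ := by
      calc a ^ γ = 2 ^ (-γ) * (2 * a) ^ γ := by
            rw [mul_rpow zero_le_two ha, ← mul_assoc, ← rpow_add two_pos]; simp
        _ ≤ 2 ^ (-γ) * (1 + a) ^ γ :=
          mul_le_mul_of_nonneg_left
            (rpow_le_rpow_of_nonpos (by positivity) (by linarith : 1 + a ≤ 2 * a) hγ)
            (by positivity)
    calc a ^ γ ≤ 2 ^ (-γ) * (1 + a) ^ γ := hscale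
      _ ≤ _ := le_mul_of_one_le_right (by positivity) (le_max_left _ _)

lemma one_add_norm_le_mul_one_add_norm {E : Type*} [SeminormedAddCommGroup E] (u v : E) :
    1 + ‖v‖ ≤ (1 + ‖u - v‖) * (1 + ‖u‖) := by
  have := norm_sub_le_norm_sub_add_norm_sub v u 0
  rw [norm_sub_rev v u, sub_zero, sub_zero] at this
  nlinarith [norm_nonneg (u - v), norm_nonneg u]

lemma one_add_norm_sub_rpow_le {E : Type*} [SeminormedAddCommGroup E] {γ : ℝ} (hγ : γ ≤ 0)
    (u v : E) : (1 + ‖u - v‖) ^ γ ≤ (1 + ‖v‖) ^ γ * (1 + ‖u‖) ^ (-γ) := by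
  have hu : 0 < 1 + ‖u‖ := by positivity
  rw [rpow_neg hu.le, ← div_eq_mul_inv, le_div_iff₀ (by positivity), ← mul_rpow (by positivity)
    hu.le]
  exact rpow_le_rpow_of_nonpos (by positivity) (one_add_norm_le_mul_one_add_norm u v) hγ

lemma rpow_norm_sub_mul_exp_le {E : Type*} [SeminormedAddCommGroup E] {γ : ℝ} (hγ : γ ≤ 0)
    (u v : E) :
    ‖u - v‖ ^ γ * exp (-‖u‖ ^ 2) ≤ 2 ^ (-γ) * exp (γ ^ 2 / 2) * (1 + ‖v‖) ^ γ *
      ((ball (0 : E) 1).indicator (‖·‖ ^ γ) (u - v) + exp (-‖u‖ ^ 2 / 2)) := by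
  set x := ‖u - v‖
  have hmax : max 1 (x ^ γ) * exp (-‖u‖ ^ 2 / 2) ≤
      (ball (0 : E) 1).indicator (‖·‖ ^ γ) (u - v) + exp (-‖u‖ ^ 2 / 2) := by
    by_cases hx : x < 1
    · have hexp : exp (-‖u‖ ^ 2 / 2) ≤ 1 := exp_le_one_iff.2 (by nlinarith [sq_nonneg ‖u‖])
      rw [indicator_of_mem (mem_ball_zero_iff.2 hx)]
      calc max 1 (x ^ γ) * exp (-‖u‖ ^ 2 / 2) ≤ (x ^ γ + 1) * exp (-‖u‖ ^ 2 / 2) := by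
            gcongr
            exact max_le (by linarith [rpow_nonneg (norm_nonneg (u - v)) γ]) (by linarith)
        _ ≤ x ^ γ + exp (-‖u‖ ^ 2 / 2) := by
            nlinarith [rpow_nonneg (norm_nonneg (u - v)) γ]
    · rw [indicator_of_notMem (by simpa using hx), zero_add,
        max_eq_left (rpow_le_one_of_one_le_of_nonpos (not_lt.1 hx) hγ), one_mul]
  calc ‖u - v‖ ^ γ * exp (-‖u‖ ^ 2)
      ≤ 2 ^ (-γ) * (1 + x) ^ γ * max 1 (x ^ γ) * exp (-‖u‖ ^ 2) := by
        gcongr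
        exact rpow_le_two_rpow_mul_one_add_rpow_mul_max (norm_nonneg _) hγ
    _ ≤ 2 ^ (-γ) * ((1 + ‖v‖) ^ γ * (1 + ‖u‖) ^ (-γ)) * max 1 (x ^ γ) * exp (-‖u‖ ^ 2) := by
        gcongr
        exact one_add_norm_sub_rpow_le hγ u v
    _ = 2 ^ (-γ) * (1 + ‖v‖) ^ γ * max 1 (x ^ γ) * ((1 + ‖u‖) ^ (-γ) * exp (-‖u‖ ^ 2)) := by
        ring
    _ ≤ 2 ^ (-γ) * (1 + ‖v‖) ^ γ * max 1 (x ^ γ) * (exp ((-γ) ^ 2 / 2) * exp (-‖u‖ ^ 2 / 2)) :=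
        mul_le_mul_of_nonneg_left
          (one_add_rpow_mul_exp_neg_sq_le (norm_nonneg u) (neg_nonneg.2 hγ)) (by positivity)
    _ = 2 ^ (-γ) * exp (γ ^ 2 / 2) * (1 + ‖v‖) ^ γ * (max 1 (x ^ γ) * exp (-‖u‖ ^ 2 / 2)) := by
        rw [neg_sq]; ring
    _ ≤ _ := by gcongr

section InnerProductSpace

variable {V : Type*} [NormedAddCommGroup V] [InnerProductSpace ℝ V] [FiniteDimensional ℝ V]
  [MeasurableSpace V] [BorelSpace V]

lemma integrable_exp_neg_mul_sq_norm {b : ℝ} (hb : 0 < b) :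
    Integrable (fun v : V => exp (-b * ‖v‖ ^ 2)) := by
  have := (GaussianFourier.integrable_cexp_neg_mul_sq_norm_add (V := V) (b := b)
    (by simpa using hb) 0 0).norm
  refine this.congr (ae_of_all _ fun v => ?_)
  simp only [zero_mul, add_zero, Complex.norm_exp]
  norm_cast

lemma integrable_exp_neg_sq_norm_div_two : Integrable (fun v : V => exp (-‖v‖ ^ 2 / 2)) :=
  (integrable_exp_neg_mul_sq_norm (V := V) (b := 1 / 2) (by norm_num)).congr
    (ae_of_all _ fun v => by ring_nf)

lemma integrable_indicator_ball_rpow_norm [Nontrivial V] {γ : ℝ} (hγ : -(finrank ℝ V : ℝ) < γ) :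
    Integrable ((ball (0 : V) 1).indicator (‖·‖ ^ γ)) := by
  have hloc : LocallyIntegrable (fun x : V => ‖x‖ ^ γ) :=
    locallyIntegrable_of_norm_le_rpow (C := 1) (α := -γ) finrank_pos (by linarith)
      (ae_of_all _ fun x => by simp [abs_of_nonneg (rpow_nonneg (norm_nonneg x) γ)])
      (by fun_prop : Measurable fun x : V => ‖x‖ ^ γ).aestronglyMeasurable
  exact ((hloc.integrableOn_isCompact (isCompact_closedBall 0 1)).mono_set
    ball_subset_closedBall).integrable_indicator measurableSet_ball

lemma integrable_rpow_norm_sub_mul_exp [Nontrivial V] {γ : ℝ}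
    (hγ : -(finrank ℝ V : ℝ) < γ) (hγ0 : γ ≤ 0) (v : V) :
    Integrable (fun u : V => ‖u - v‖ ^ γ * exp (-‖u‖ ^ 2)) := by
  refine ((((integrable_indicator_ball_rpow_norm hγ).comp_sub_right v).add
    integrable_exp_neg_sq_norm_div_two).const_mul
      (2 ^ (-γ) * exp (γ ^ 2 / 2) * (1 + ‖v‖) ^ γ)).mono' (by fun_prop) (ae_of_all _ fun u => ?_)
  rw [norm_of_nonneg (by positivity)]
  exact rpow_norm_sub_mul_exp_le hγ0 u v

theorem exists_integral_rpow_norm_sub_mul_exp_le [Nontrivial V] {γ : ℝ}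
    (hγ : -(finrank ℝ V : ℝ) < γ) (hγ0 : γ ≤ 0) :
    ∃ C, ∀ v : V, ∫ u, ‖u - v‖ ^ γ * exp (-‖u‖ ^ 2) ≤ C * (1 + ‖v‖) ^ γ := by
  set K := 2 ^ (-γ) * exp (γ ^ 2 / 2)
  set F := (ball (0 : V) 1).indicator (‖·‖ ^ γ)
  refine ⟨K * ((∫ x in ball (0 : V) 1, ‖x‖ ^ γ) + ∫ u : V, exp (-‖u‖ ^ 2 / 2)), fun v => ?_⟩
  have hF := (integrable_indicator_ball_rpow_norm hγ).comp_sub_right v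
  calc ∫ u, ‖u - v‖ ^ γ * exp (-‖u‖ ^ 2)
      ≤ ∫ u, K * (1 + ‖v‖) ^ γ * (F (u - v) + exp (-‖u‖ ^ 2 / 2)) :=
        integral_mono_of_nonneg (ae_of_all _ fun u => by positivity)
          ((hF.add integrable_exp_neg_sq_norm_div_two).const_mul _)
          (ae_of_all _ fun u => rpow_norm_sub_mul_exp_le hγ0 u v)
    _ = K * (1 + ‖v‖) ^ γ * ((∫ x in ball (0 : V) 1, ‖x‖ ^ γ) + ∫ u : V, exp (-‖u‖ ^ 2 / 2)) := by
        rw [integral_const_mul, integral_add hF integrable_exp_neg_sq_norm_div_two,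
          integral_sub_right_eq_self F v, integral_indicator measurableSet_ball]
    _ = _ := by ring

theorem exists_le_integral_rpow_norm_sub_mul_exp [Nontrivial V] {γ : ℝ}
    (hγ : -(finrank ℝ V : ℝ) < γ) (hγ0 : γ ≤ 0) :
    ∃ c > 0, ∀ v : V, c * (1 + ‖v‖) ^ γ ≤ ∫ u, ‖u - v‖ ^ γ * exp (-‖u‖ ^ 2) := by
  have hG : Integrable (fun u : V => exp (-‖u‖ ^ 2)) := by
    simpa using integrable_exp_neg_mul_sq_norm (V := V) one_pos
  refine ⟨∫ u in ball (0 : V) 1, exp (-‖u‖ ^ 2), ?_, fun v => ?_⟩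
  · have : NeZero (volume.restrict (ball (0 : V) 1)) :=
      ⟨by simpa [Measure.restrict_eq_zero] using (measure_ball_pos volume (0 : V) one_pos).ne'⟩
    exact integral_exp_pos hG.integrableOn
  have hint := integrable_rpow_norm_sub_mul_exp hγ hγ0 v
  have hpt : ∀ᵐ u ∂volume.restrict (ball (0 : V) 1),
      (1 + ‖v‖) ^ γ * exp (-‖u‖ ^ 2) ≤ ‖u - v‖ ^ γ * exp (-‖u‖ ^ 2) := by
    filter_upwards [ae_restrict_mem measurableSet_ball,
      ae_restrict_of_ae (compl_mem_ae_iff.2 (measure_singleton v))] with u hu huv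
    -- only a.e.: at `u = v` the junk value `0 ^ γ = 0` breaks the bound
    have hdist : ‖u - v‖ ≤ 1 + ‖v‖ := by
      linarith [norm_sub_le u v, mem_ball_zero_iff.1 hu]
    exact mul_le_mul_of_nonneg_right
      (rpow_le_rpow_of_nonpos (norm_pos_iff.2 (sub_ne_zero.2 huv)) hdist hγ0) (exp_pos _).le
  calc (∫ u in ball (0 : V) 1, exp (-‖u‖ ^ 2)) * (1 + ‖v‖) ^ γ
      = ∫ u in ball (0 : V) 1, (1 + ‖v‖) ^ γ * exp (-‖u‖ ^ 2) := by
        rw [integral_const_mul, mul_comm]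
    _ ≤ ∫ u in ball (0 : V) 1, ‖u - v‖ ^ γ * exp (-‖u‖ ^ 2) :=
        setIntegral_mono_ae_restrict (hG.integrableOn.const_mul _) hint.integrableOn hpt
    _ ≤ ∫ u, ‖u - v‖ ^ γ * exp (-‖u‖ ^ 2) :=
        setIntegral_le_integral hint (ae_of_all _ fun u => by positivity)

end InnerProductSpace

lemma nu_eq_integral_mul (γ : ℝ) (B : Sphere2 → ℝ) (v : R3) :
    nu γ B v = (∫ u, ‖u - v‖ ^ γ * exp (-‖u‖ ^ 2)) * ∫ ω, B ω ∂sphMeasure := by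
  simp_rw [nu, mul_right_comm _ (B _), integral_const_mul, integral_mul_const]

theorem nu_equiv_weight_general
    (γ : ℝ) (hγ : γ ∈ Set.Ioo (-3 : ℝ) 0)
    (B : Sphere2 → ℝ)
    (hBpos : 0 < ∫ ω : Sphere2, B ω ∂sphMeasure) :
    ∃ c C : ℝ, 0 < c ∧ c ≤ C ∧
      ∀ v : R3, c * wt γ v ≤ nu γ B v ∧ nu γ B v ≤ C * wt γ v := by
  have hdim : -(finrank ℝ R3 : ℝ) < γ := by simpa using hγ.1
  obtain ⟨c, hc, hlow⟩ := exists_le_integral_rpow_norm_sub_mul_exp hdim hγ.2.le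
  obtain ⟨C, hup⟩ := exists_integral_rpow_norm_sub_mul_exp_le hdim hγ.2.le
  set S := ∫ ω : Sphere2, B ω ∂sphMeasure
  have hbounds : ∀ v : R3, c * S * wt γ v ≤ nu γ B v ∧ nu γ B v ≤ C * S * wt γ v := fun v => by
    rw [nu_eq_integral_mul, wt, mul_right_comm c, mul_right_comm C]
    exact ⟨mul_le_mul_of_nonneg_right (hlow v) hBpos.le,
      mul_le_mul_of_nonneg_right (hup v) hBpos.le⟩
  refine ⟨c * S, C * S, mul_pos hc hBpos, ?_, hbounds⟩
  simpa [wt] using (hbounds 0).1.trans (hbounds 0).2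

/-- For γ ∈ (−3,0), under the Grad angular cutoff and assuming
∫_{𝕊²} B(ω) dω > 0, the collision frequency ν is equivalent to the weight
w(v) = (1+|v|)^γ: there are 0 < c ≤ C with c(1+|v|)^γ ≤ ν(v) ≤ C(1+|v|)^γ for all v. -/
theorem nu_equiv_weight
    (γ : ℝ) (hγ : γ ∈ Set.Ioo (-3 : ℝ) 0)
    (B : Sphere2 → ℝ) (C₀ : ℝ) (hC₀ : 0 < C₀) (hBmeas : Measurable B)
    (hB : ∀ ω, 0 ≤ B ω ∧ B ω ≤ C₀)
    (hBpos : 0 < ∫ ω : Sphere2, B ω ∂sphMeasure) :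
    ∃ c C : ℝ, 0 < c ∧ c ≤ C ∧
      ∀ v : R3, c * wt γ v ≤ nu γ B v ∧ nu γ B v ≤ C * wt γ v :=
  nu_equiv_weight_general γ hγ B hBpos
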